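/- Define D(p) = p⁶ − 4p⁵ + 6p⁴ − 6p³ + 5p² − 2p + 1, f₃(p) = p²·(p² − 4p + 4)/D(p), and f₁(p) = p·(p⁵ − 4p⁴ + 6p³ − 5p² + 2p + 1)/D(p). Then for all p ∈ [0,1]: (a) D(p) − p²·(p − 2)² = (1 − p)³·(1 + p + p² − p³), so that f₃(p) = 1 − (1−p)³·(1 + p + p² − p³)/D(p); (b) 0 ≤ f₃(p) ≤ 1 with f₃(0) = 0 and f₃(1) = 1; (c) f₃ is monotonically nondecreasing on [0,1]; (d) f₃(p) ≤ f₁(p) for all p ∈ [0,1]. -/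

import Mathlib

/-!
On `[0, 1]` the denominator splits as `D(p) = N(p) + R(p)` with `N(p) = p²(p - 2)²` and
`R(p) = (1 - p)³(1 + p + p² - p³)`, both nonnegative, so `f₃ = N / (N + R)` lies in `[0, 1]`.
Since `N = (p(2 - p))²` increases and `R` decreases on `[0, 1]`, `f₃` is monotone. Finally
`f₁ - f₃ = p(1 - p)³(1 + p - p²) / D ≥ 0`.
-/

open Set

/-- Denominator of the BCJR transfer functions of the rate-2/3 recursive systematic
convolutional encoder with `G(D) = [[1, 0, 1/(1+D)], [0, 1, D/(1+D)]]`. -/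
noncomputable def Dden (p : ℝ) : ℝ :=
  p ^ 6 - 4 * p ^ 5 + 6 * p ^ 4 - 6 * p ^ 3 + 5 * p ^ 2 - 2 * p + 1

/-- Extrinsic erasure-probability transfer function, for the parity output bit, of the
BCJR decoder on the BEC, at equal input erasure probability `p`. -/
noncomputable def f₃ (p : ℝ) : ℝ := p ^ 2 * (p ^ 2 - 4 * p + 4) / Dden p

/-- The corresponding transfer function for the systematic output bits. -/
noncomputable def f₁ (p : ℝ) : ℝ :=
  p * (p ^ 5 - 4 * p ^ 4 + 6 * p ^ 3 - 5 * p ^ 2 + 2 * p + 1) / Dden p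

section
variable {𝕜 : Type*} [Field 𝕜] [LinearOrder 𝕜] [IsStrictOrderedRing 𝕜]

theorem div_add_mem_Icc {x y : 𝕜} (hx : 0 ≤ x) (hy : 0 ≤ y) : x / (x + y) ∈ Icc 0 1 :=
  ⟨div_nonneg hx (add_nonneg hx hy),
    div_le_one_of_le₀ (le_add_of_nonneg_right hy) (add_nonneg hx hy)⟩

theorem div_add_le_div_add {x y x' y' : 𝕜} (hx : 0 ≤ x) (hy' : 0 ≤ y') (hxx' : x ≤ x')
    (hy'y : y' ≤ y) : x / (x + y) ≤ x' / (x' + y') := by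
  rcases hx.eq_or_lt with rfl | hx
  · simpa using div_nonneg (hx.trans hxx') (add_nonneg (hx.trans hxx') hy')
  have hx' := hx.trans_le hxx'
  rw [div_le_div_iff₀ (by linarith) (by linarith)]
  nlinarith [mul_le_mul hxx' hy'y hy' hx'.le]

theorem MonotoneOn.div_add {α : Type*} [Preorder α] {f g : α → 𝕜} {s : Set α}
    (hf : MonotoneOn f s) (hg : AntitoneOn g s) (hf₀ : ∀ x ∈ s, 0 ≤ f x)
    (hg₀ : ∀ x ∈ s, 0 ≤ g x) : MonotoneOn (fun x ↦ f x / (f x + g x)) s :=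
  fun _ ha _ hb hab ↦ div_add_le_div_add (hf₀ _ ha) (hg₀ _ hb) (hf ha hb hab) (hg ha hb hab)

end

theorem Dden_eq_add (p : ℝ) :
    Dden p = p ^ 2 * (p - 2) ^ 2 + (1 - p) ^ 3 * (1 + p + p ^ 2 - p ^ 3) := by
  unfold Dden; ring

theorem f₃_eq_div_add (p : ℝ) :
    f₃ p = p ^ 2 * (p - 2) ^ 2 /
      (p ^ 2 * (p - 2) ^ 2 + (1 - p) ^ 3 * (1 + p + p ^ 2 - p ^ 3)) := by
  rw [f₃, ← Dden_eq_add]; ring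

theorem one_sub_pow_three_mul_nonneg {p : ℝ} (hp : p ≤ 1) :
    0 ≤ (1 - p) ^ 3 * (1 + p + p ^ 2 - p ^ 3) := by
  have h : 0 ≤ 1 - p := sub_nonneg.2 hp
  refine mul_nonneg (pow_nonneg h 3) ?_
  -- 9 (1 + p + p² - p³) = (1 - p) (3p + 1)² + 2 (3p² + 2p + 4)
  nlinarith [sq_nonneg (3 * p + 1), mul_nonneg h (sq_nonneg (3 * p + 1))]

theorem Dden_pos {p : ℝ} (hp : p ≤ 1) : 0 < Dden p := by
  rcases eq_or_ne p 0 with rfl | hp₀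
  · norm_num [Dden]
  rw [Dden_eq_add]
  have hp₂ : p - 2 ≠ 0 := by linarith
  exact add_pos_of_pos_of_nonneg (by positivity) (one_sub_pow_three_mul_nonneg hp)

theorem monotoneOn_sq_mul_sub_two_sq :
    MonotoneOn (fun p : ℝ ↦ p ^ 2 * (p - 2) ^ 2) (Icc 0 1) := by
  intro a ⟨ha₀, _⟩ b ⟨_, hb₁⟩ hab
  have h : a * (2 - a) ≤ b * (2 - b) := by nlinarith
  calc a ^ 2 * (a - 2) ^ 2 = (a * (2 - a)) ^ 2 := by ring
    _ ≤ (b * (2 - b)) ^ 2 := pow_le_pow_left₀ (by nlinarith) h 2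
    _ = b ^ 2 * (b - 2) ^ 2 := by ring

theorem antitoneOn_one_sub_pow_three_mul :
    AntitoneOn (fun p : ℝ ↦ (1 - p) ^ 3 * (1 + p + p ^ 2 - p ^ 3)) (Icc 0 1) := by
  have hderiv (x : ℝ) : HasDerivAt (fun p : ℝ ↦ (1 - p) ^ 3 * (1 + p + p ^ 2 - p ^ 3))
      (-(1 - x) ^ 2 * (2 + 2 * x + 8 * x ^ 2 - 6 * x ^ 3)) x := by
    have h₁ := ((hasDerivAt_id' x).const_sub 1).pow 3
    have h₂ := (((hasDerivAt_id' x).const_add 1).add (hasDerivAt_pow 2 x)).sub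
      (hasDerivAt_pow 3 x)
    refine (h₁.mul h₂).congr_deriv ?_
    simp only [Pi.pow_apply, Pi.add_apply, Pi.sub_apply]
    push_cast
    ring
  refine antitoneOn_of_hasDerivWithinAt_nonpos (convex_Icc 0 1) (by fun_prop)
    (fun x _ ↦ (hderiv x).hasDerivWithinAt) fun x hx ↦ ?_
  rw [interior_Icc] at hx
  obtain ⟨hx₀, hx₁⟩ := hx
  have : 0 ≤ 2 + 2 * x + 8 * x ^ 2 - 6 * x ^ 3 := by
    nlinarith [mul_pos (mul_pos hx₀ hx₀) (sub_pos.2 hx₁)]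
  rw [neg_mul]; exact neg_nonpos.2 (mul_nonneg (sq_nonneg _) this)

theorem monotoneOn_f₃ : MonotoneOn f₃ (Icc 0 1) := by
  simpa only [funext f₃_eq_div_add] using
    monotoneOn_sq_mul_sub_two_sq.div_add antitoneOn_one_sub_pow_three_mul
      (fun p _ ↦ by positivity) fun p hp ↦ one_sub_pow_three_mul_nonneg hp.2

theorem f₃_mem_Icc {p : ℝ} (hp : p ≤ 1) : f₃ p ∈ Icc 0 1 := by
  rw [f₃_eq_div_add]; exact div_add_mem_Icc (by positivity) (one_sub_pow_three_mul_nonneg hp)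

theorem f₃_eq_one_sub_div {p : ℝ} (hD : Dden p ≠ 0) :
    f₃ p = 1 - (1 - p) ^ 3 * (1 + p + p ^ 2 - p ^ 3) / Dden p := by
  rw [one_sub_div hD, f₃, Dden_eq_add]; ring

theorem f₃_le_f₁ {p : ℝ} (hp₀ : 0 ≤ p) (hp₁ : p ≤ 1) : f₃ p ≤ f₁ p := by
  refine div_le_div_of_nonneg_right (sub_nonneg.1 ?_) (Dden_pos hp₁).le
  calc (0 : ℝ) ≤ p * (1 - p) ^ 3 * (1 + p * (1 - p)) := by
        have := sub_nonneg.2 hp₁; positivity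
    _ = _ := by ring

/-- Properties of `f₃`: (a) `D(p) − p²(p−2)² = (1−p)³(1 + p + p² − p³)`, so
`f₃(p) = 1 − (1−p)³(1 + p + p² − p³)/D(p)`; (b) `0 ≤ f₃(p) ≤ 1` with `f₃(0) = 0`,
`f₃(1) = 1`; (c) `f₃` is monotonically nondecreasing on `[0,1]`;
(d) `f₃(p) ≤ f₁(p)` on `[0,1]`. -/
theorem f₃_properties :
    (∀ p ∈ Icc (0:ℝ) 1,
      Dden p - p ^ 2 * (p - 2) ^ 2 = (1 - p) ^ 3 * (1 + p + p ^ 2 - p ^ 3) ∧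
      f₃ p = 1 - (1 - p) ^ 3 * (1 + p + p ^ 2 - p ^ 3) / Dden p) ∧
    (∀ p ∈ Icc (0:ℝ) 1, 0 ≤ f₃ p ∧ f₃ p ≤ 1) ∧ f₃ 0 = 0 ∧ f₃ 1 = 1 ∧
    MonotoneOn f₃ (Icc (0:ℝ) 1) ∧
    (∀ p ∈ Icc (0:ℝ) 1, f₃ p ≤ f₁ p) :=
  ⟨fun p hp ↦ ⟨by rw [Dden_eq_add]; ring, f₃_eq_one_sub_div (Dden_pos hp.2).ne'⟩,
    fun p hp ↦ f₃_mem_Icc hp.2, by norm_num [f₃], by norm_num [f₃, Dden], monotoneOn_f₃,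
    fun p hp ↦ f₃_le_f₁ hp.1 hp.2⟩
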